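/- There exists a constant C > 0 depending only on c and θ such that for every x ≥ 2, every real N with g(Δ₁) ≤ N and 2N + 1 ≤ g(Δ₂), and every integer h ≥ 1, one has |Σ_{N < n ≤ 2N} Λ(n)·(e(−h·m(n+1)) − e(−h·m(n)))| ≤ C·h·N^{γ−1}·max_{N₁ ∈ [N, 2N]} |Σ_{N < n ≤ N₁} Λ(n)·e(h·m(n))|, where the sums run over integers n in the indicated ranges. -/

import Mathlib

open Real

/-- `Δ₁ = exp(π·⌊(log x)/π⌋ + arctan 1)` -/
noncomputable def Δ₁ (x : ℝ) : ℝ :=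
  Real.exp (Real.pi * (⌊Real.log x / Real.pi⌋ : ℝ) + Real.arctan 1)

/-- `Δ₂ = exp(π·⌊(log x)/π⌋ + arctan 2)` -/
noncomputable def Δ₂ (x : ℝ) : ℝ :=
  Real.exp (Real.pi * (⌊Real.log x / Real.pi⌋ : ℝ) + Real.arctan 2)

/-- `g(y) = y^c · (tan(log y))^θ` (real powers). -/
noncomputable def g (c θ y : ℝ) : ℝ := y ^ c * Real.tan (Real.log y) ^ θ

/-- `e(u) = exp(2πiu)`. -/
noncomputable def e (u : ℝ) : ℂ := Complex.exp (2 * (Real.pi : ℂ) * Complex.I * (u : ℂ))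

/-!
Write `μ i = m(n₀ + i)` for the integers `n₀ + i` in `(N, 2N]` and `δ i = μ (i + 1) - μ i`.
Since `e(-h μ (i + 1)) - e(-h μ i) = e(-h μ i) (e(-h δ i) - 1)`, Abel summation bounds the sum by
the largest partial sum of `Λ(n) e(-h μ)` (the conjugate of the one on the right) times the total
variation of the weights `e(-h δ i) - 1`. That variation is at most `2π h δ 0` because the increments `δ i`
decrease: `g` is convex on `[Δ₁, Δ₂]`, being the product of the increasing convex functions `y^c`
and `tan(log y)^θ` (`tan ∘ log` is convex where `tan ∘ log ≥ 1/2`), so its inverse `m` is concave.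
Finally `g' ≥ c y^(c-1)` and `g y ≤ 2^θ y^c` give `δ 0 ≤ (2^θ / N)^(1 - 1/c) / c`.
-/

open Finset

lemma e_eq_exp_I_mul (u : ℝ) : e u = Complex.exp (Complex.I * ↑(2 * π * u)) := by
  rw [e]; push_cast; ring_nf

lemma e_add (u v : ℝ) : e (u + v) = e u * e v := by
  simp only [e_eq_exp_I_mul, ← Complex.exp_add]; push_cast; ring_nf

lemma e_zero : e 0 = 1 := by simp [e]

lemma norm_e (u : ℝ) : ‖e u‖ = 1 := by
  rw [e_eq_exp_I_mul, mul_comm, Complex.norm_exp_ofReal_mul_I]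

lemma star_e (u : ℝ) : star (e u) = e (-u) := by
  rw [e_eq_exp_I_mul, e_eq_exp_I_mul, Complex.star_def, ← Complex.exp_conj, map_mul,
    Complex.conj_I, Complex.conj_ofReal]
  push_cast; ring_nf

lemma norm_e_sub_e_le (u v : ℝ) : ‖e u - e v‖ ≤ 2 * π * |u - v| := by
  have : e u - e v = e v * (e (u - v) - 1) := by rw [mul_sub, ← e_add]; ring_nf
  rw [this, norm_mul, norm_e, one_mul, e_eq_exp_I_mul]
  refine Real.norm_exp_I_mul_ofReal_sub_one_le.trans_eq ?_
  rw [Real.norm_eq_abs, abs_mul, abs_of_pos Real.two_pi_pos]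

lemma norm_sum_ofReal_mul_e_neg (s : Finset ℕ) (w φ : ℕ → ℝ) :
    ‖∑ i ∈ s, (w i : ℂ) * e (-φ i)‖ = ‖∑ i ∈ s, (w i : ℂ) * e (φ i)‖ := by
  rw [← norm_star, star_sum]
  simp [star_e]

theorem norm_sum_range_smul_le {𝕜 E : Type*} [NormedField 𝕜] [SeminormedAddCommGroup E]
    [NormedSpace 𝕜 E] {w : ℕ → 𝕜} {f : ℕ → E} {d : ℕ → ℝ} {M K : ℝ} {L : ℕ}
    (hf : ∀ j ≤ L, ‖∑ i ∈ range j, f i‖ ≤ M)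
    (hw : ∀ i < L - 1, ‖w (i + 1) - w i‖ ≤ K * (d i - d (i + 1)))
    (hwL : ‖w (L - 1)‖ ≤ K * d (L - 1)) :
    ‖∑ i ∈ range L, w i • f i‖ ≤ K * d 0 * M := by
  have hM : 0 ≤ M := (norm_nonneg _).trans (hf 0 (Nat.zero_le _))
  rw [sum_range_by_parts]
  calc _ ≤ ‖w (L - 1)‖ * M + ∑ i ∈ range (L - 1), K * (d i - d (i + 1)) * M := by
        refine (norm_sub_le _ _).trans (add_le_add ?_ ((norm_sum_le _ _).trans ?_))
        · rw [norm_smul]; exact mul_le_mul_of_nonneg_left (hf L le_rfl) (norm_nonneg _)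
        · refine sum_le_sum fun i hi => ?_
          rw [mem_range] at hi
          rw [norm_smul]
          exact mul_le_mul (hw i hi) (hf _ (by omega)) (norm_nonneg _)
            ((norm_nonneg _).trans (hw i hi))
    _ ≤ K * d (L - 1) * M + K * (d 0 - d (L - 1)) * M := by
        rw [← sum_mul, ← mul_sum, sum_range_sub']
        gcongr
    _ = K * d 0 * M := by ring

theorem norm_sum_mul_e_sub_e_le {w μ : ℕ → ℝ} {L : ℕ} {M t : ℝ} (ht : 0 ≤ t) (hL : 0 < L)
    (hμ : ∀ i < L - 1, μ (i + 2) - μ (i + 1) ≤ μ (i + 1) - μ i) (hμL : μ (L - 1) ≤ μ L)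
    (hS : ∀ j ≤ L, ‖∑ i ∈ range j, (w i : ℂ) * e (t * μ i)‖ ≤ M) :
    ‖∑ i ∈ range L, (w i : ℂ) * (e (-t * μ (i + 1)) - e (-t * μ i))‖ ≤
      2 * π * t * (μ 1 - μ 0) * M := by
  have hterm : ∀ i, (w i : ℂ) * (e (-t * μ (i + 1)) - e (-t * μ i)) =
      (e (-t * (μ (i + 1) - μ i)) - e 0) • ((w i : ℂ) * e (-t * μ i)) := by
    intro i
    rw [smul_eq_mul, e_zero, sub_mul, one_mul, mul_left_comm, ← e_add]
    ring_nf
  simp_rw [hterm]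
  refine norm_sum_range_smul_le (d := fun i => μ (i + 1) - μ i) (fun j hj => ?_)
    (fun i _ => ?_) ?_
  · simpa only [neg_mul, norm_sum_ofReal_mul_e_neg] using hS j hj
  · rw [sub_sub_sub_cancel_right]
    refine (norm_e_sub_e_le _ _).trans_eq ?_
    rw [abs_of_nonneg (by nlinarith [hμ i ‹_›])]
    ring
  · refine (norm_e_sub_e_le _ _).trans_eq ?_
    rw [Nat.sub_add_cancel hL, sub_zero, abs_of_nonpos (by nlinarith)]
    ring

section TanLog

variable {x y : ℝ}

lemma Δ₁_pos (x : ℝ) : 0 < Δ₁ x := Real.exp_pos _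

lemma one_le_Δ₁ (hx : 1 ≤ x) : 1 ≤ Δ₁ x := by
  have hk : (0 : ℝ) ≤ ⌊log x / π⌋ :=
    Int.cast_nonneg_iff.2 (Int.floor_nonneg.2 (div_nonneg (log_nonneg hx) pi_pos.le))
  have : 0 < arctan 1 := by rw [arctan_one]; positivity
  exact one_le_exp (by positivity)

lemma Δ₁_mem_Icc (x : ℝ) : Δ₁ x ∈ Set.Icc (Δ₁ x) (Δ₂ x) :=
  Set.left_mem_Icc.2 <| exp_le_exp.2 <| by
    linarith [arctan_strictMono.monotone (one_le_two : (1 : ℝ) ≤ 2)]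

lemma log_sub_mem_Icc_arctan (hy : y ∈ Set.Icc (Δ₁ x) (Δ₂ x)) :
    log y - ⌊log x / π⌋ * π ∈ Set.Icc (arctan 1) (arctan 2) := by
  have hy₀ : 0 < y := (Δ₁_pos x).trans_le hy.1
  have h₁ := (le_log_iff_exp_le hy₀).2 hy.1
  have h₂ := (log_le_iff_le_exp hy₀).2 hy.2
  constructor <;> linarith

lemma Icc_arctan_subset_Ioo : Set.Icc (arctan 1) (arctan 2) ⊆ Set.Ioo (-(π / 2)) (π / 2) :=
  Set.Icc_subset_Ioo (neg_pi_div_two_lt_arctan 1) (arctan_lt_pi_div_two 2)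

lemma cos_log_ne_zero (hy : y ∈ Set.Icc (Δ₁ x) (Δ₂ x)) : cos (log y) ≠ 0 := by
  have hs := Icc_arctan_subset_Ioo (log_sub_mem_Icc_arctan hy)
  rw [← sub_add_cancel (log y) (⌊log x / π⌋ * π), cos_add_int_mul_pi]
  exact mul_ne_zero (zpow_ne_zero _ (by norm_num)) (cos_pos_of_mem_Ioo hs).ne'

lemma monotoneOn_tan_log : MonotoneOn (fun y => tan (log y)) (Set.Icc (Δ₁ x) (Δ₂ x)) := by
  intro y hy y' hy' hyy'
  dsimp only
  rw [← tan_sub_int_mul_pi (log y) ⌊log x / π⌋, ← tan_sub_int_mul_pi (log y') ⌊log x / π⌋]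
  refine strictMonoOn_tan.monotoneOn (Icc_arctan_subset_Ioo (log_sub_mem_Icc_arctan hy))
    (Icc_arctan_subset_Ioo (log_sub_mem_Icc_arctan hy')) ?_
  have := log_le_log ((Δ₁_pos x).trans_le hy.1) hyy'
  linarith

lemma tan_log_mem_Icc (hy : y ∈ Set.Icc (Δ₁ x) (Δ₂ x)) : tan (log y) ∈ Set.Icc 1 2 := by
  have hs := log_sub_mem_Icc_arctan hy
  have hmono := strictMonoOn_tan.monotoneOn.mono Icc_arctan_subset_Ioo
  rw [← tan_sub_int_mul_pi (log y) ⌊log x / π⌋]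
  have hle : arctan 1 ≤ arctan 2 := hs.1.trans hs.2
  exact ⟨by simpa using hmono (Set.left_mem_Icc.2 hle) hs hs.1, by
    simpa using hmono hs (Set.right_mem_Icc.2 hle) hs.2⟩

end TanLog

lemma hasDerivAt_tan_log {y : ℝ} (hy : 0 < y) (hcos : cos (log y) ≠ 0) :
    HasDerivAt (fun y => tan (log y)) ((1 + tan (log y) ^ 2) / y) y := by
  refine ((hasDerivAt_tan hcos).comp y (hasDerivAt_log hy.ne')).congr_deriv ?_
  rw [← inv_one_add_tan_sq hcos]
  field_simp

lemma convexOn_tan_log {D : Set ℝ} (hD : Convex ℝ D) (hpos : ∀ y ∈ D, 0 < y)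
    (hcos : ∀ y ∈ D, cos (log y) ≠ 0) (htan : ∀ y ∈ D, 1 / 2 ≤ tan (log y)) :
    ConvexOn ℝ D (fun y => tan (log y)) := by
  have hderiv : ∀ y ∈ D, HasDerivAt (fun y => tan (log y)) ((1 + tan (log y) ^ 2) / y) y :=
    fun y hy => hasDerivAt_tan_log (hpos y hy) (hcos y hy)
  refine convexOn_of_hasDerivWithinAt2_nonneg hD
    (f'' := fun y => (1 + tan (log y) ^ 2) * (2 * tan (log y) - 1) / y ^ 2)
    (fun y hy => (hderiv y hy).continuousAt.continuousWithinAt)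
    (fun y hy => (hderiv y (interior_subset hy)).hasDerivWithinAt) (fun y hy => ?_)
    (fun y hy => ?_)
  · have hy₀ := hpos y (interior_subset hy)
    refine ((((hderiv y (interior_subset hy)).pow 2).const_add 1).div (hasDerivAt_id y)
      hy₀.ne').hasDerivWithinAt.congr_deriv ?_
    simp only [id, Pi.pow_apply]
    field_simp
    ring
  · have := htan y (interior_subset hy)
    exact div_nonneg (mul_nonneg (by positivity) (by linarith)) (sq_nonneg _)

lemma mul_rpow_sub_one_mul_sub_le_rpow_sub_rpow {c y y' : ℝ} (hc : 1 ≤ c) (hy : 0 < y)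
    (hy' : 0 ≤ y') : c * y ^ (c - 1) * (y' - y) ≤ y' ^ c - y ^ c := by
  have hs : -1 ≤ (y' - y) / y := by rw [le_div_iff₀ hy]; linarith
  have key := mul_le_mul_of_nonneg_left (one_add_mul_self_le_rpow_one_add hs hc)
    (rpow_nonneg hy.le c)
  rw [← mul_rpow hy.le (by linarith), show y * (1 + (y' - y) / y) = y' by field_simp; ring] at key
  rw [rpow_sub_one hy.ne']
  calc c * (y ^ c / y) * (y' - y) = y ^ c * (1 + c * ((y' - y) / y)) - y ^ c := by
        field_simp; ring
    _ ≤ y' ^ c - y ^ c := by linarith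

theorem ConvexOn.sub_le_sub_of_map_eq_add {s : Set ℝ} {f : ℝ → ℝ} (hf : ConvexOn ℝ s f)
    (hf' : StrictMonoOn f s) {y₀ y₁ y₂ t : ℝ} (h₀ : y₀ ∈ s) (h₁ : y₁ ∈ s) (h₂ : y₂ ∈ s)
    (ht : 0 < t) (h₀₁ : f y₁ = f y₀ + t) (h₁₂ : f y₂ = f y₁ + t) : y₂ - y₁ ≤ y₁ - y₀ := by
  have hlt₀ : y₀ < y₁ := (hf'.lt_iff_lt h₀ h₁).1 (by linarith)
  have hlt₁ : y₁ < y₂ := (hf'.lt_iff_lt h₁ h₂).1 (by linarith)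
  have := hf.slope_mono_adjacent h₀ h₂ hlt₀ hlt₁
  rwa [h₁₂, add_sub_cancel_left, h₀₁, add_sub_cancel_left,
    div_le_div_iff_of_pos_left ht (sub_pos.2 hlt₀) (sub_pos.2 hlt₁)] at this

section G

variable {c θ x y y' : ℝ}

lemma convexOn_g (hc : 1 ≤ c) (hθ : 1 ≤ θ) :
    ConvexOn ℝ (Set.Icc (Δ₁ x) (Δ₂ x)) (g c θ) := by
  set I := Set.Icc (Δ₁ x) (Δ₂ x)
  set u : ℝ → ℝ := fun y => tan (log y)
  have hI : ∀ y ∈ I, 0 < y := fun y hy => (Δ₁_pos x).trans_le hy.1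
  have hu : ConvexOn ℝ I u := convexOn_tan_log (convex_Icc _ _) hI
    (fun y hy => cos_log_ne_zero hy) (fun y hy => by linarith [(tan_log_mem_Icc hy).1])
  have hu_image : u '' I ⊆ Set.Ici 0 := by
    rintro _ ⟨y, hy, rfl⟩
    exact zero_le_one.trans (tan_log_mem_Icc hy).1
  have hu_cont : ContinuousOn u I := fun y hy =>
    (hasDerivAt_tan_log (hI y hy) (cos_log_ne_zero hy)).continuousAt.continuousWithinAt
  have hpow_mono := monotoneOn_rpow_Ici_of_exponent_nonneg (zero_le_one.trans hθ)
  have huθ : ConvexOn ℝ I (fun y => u y ^ θ) :=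
    ((convexOn_rpow hθ).subset hu_image
      (isPreconnected_Icc.image u hu_cont).ordConnected.convex).comp hu
      (hpow_mono.mono hu_image)
  have hrpow : ConvexOn ℝ I (fun y => y ^ c) :=
    (convexOn_rpow hc).subset (fun y hy => (hI y hy).le) (convex_Icc _ _)
  refine hrpow.mul huθ (fun y hy => rpow_nonneg (hI y hy).le _)
    (fun y hy => rpow_nonneg (hu_image ⟨y, hy, rfl⟩) _) (MonotoneOn.monovaryOn ?_ ?_)
  · exact (monotoneOn_rpow_Ici_of_exponent_nonneg (zero_le_one.trans hc)).mono
      fun y hy => (hI y hy).le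
  · exact hpow_mono.comp monotoneOn_tan_log fun y hy => hu_image ⟨y, hy, rfl⟩

lemma rpow_le_g (hθ : 0 ≤ θ) (hy : y ∈ Set.Icc (Δ₁ x) (Δ₂ x)) : y ^ c ≤ g c θ y :=
  le_mul_of_one_le_right (rpow_nonneg ((Δ₁_pos x).trans_le hy.1).le _)
    (one_le_rpow (tan_log_mem_Icc hy).1 hθ)

lemma g_le_two_rpow_mul (hθ : 0 ≤ θ) (hy : y ∈ Set.Icc (Δ₁ x) (Δ₂ x)) :
    g c θ y ≤ 2 ^ θ * y ^ c := by
  have hT := tan_log_mem_Icc hy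
  rw [g, mul_comm]
  exact mul_le_mul_of_nonneg_right (rpow_le_rpow (by linarith [hT.1]) hT.2 hθ)
    (rpow_nonneg ((Δ₁_pos x).trans_le hy.1).le _)

lemma mul_rpow_sub_one_mul_sub_le_g_sub (hc : 1 ≤ c) (hθ : 0 ≤ θ)
    (hy : y ∈ Set.Icc (Δ₁ x) (Δ₂ x)) (hy' : y' ∈ Set.Icc (Δ₁ x) (Δ₂ x)) (hyy' : y ≤ y') :
    c * y ^ (c - 1) * (y' - y) ≤ g c θ y' - g c θ y := by
  have hy₀ : 0 < y := (Δ₁_pos x).trans_le hy.1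
  have hT := tan_log_mem_Icc hy
  have hTθ : 1 ≤ tan (log y) ^ θ := one_le_rpow hT.1 hθ
  have hTT' : tan (log y) ^ θ ≤ tan (log y') ^ θ :=
    rpow_le_rpow (by linarith [hT.1]) (monotoneOn_tan_log hy hy' hyy') hθ
  have hyc : y ^ c ≤ y' ^ c := rpow_le_rpow hy₀.le hyy' (by linarith)
  have := mul_rpow_sub_one_mul_sub_le_rpow_sub_rpow hc hy₀ (hy₀.le.trans hyy')
  rw [g, g]
  nlinarith [mul_le_mul_of_nonneg_left hTT' (rpow_nonneg (hy₀.le.trans hyy') c),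
    mul_le_mul_of_nonneg_left hTθ (sub_nonneg.2 hyc)]

lemma strictMonoOn_g (hc : 1 ≤ c) (hθ : 0 ≤ θ) :
    StrictMonoOn (g c θ) (Set.Icc (Δ₁ x) (Δ₂ x)) := fun y hy y' hy' hyy' => by
  have := mul_rpow_sub_one_mul_sub_le_g_sub hc hθ hy hy' hyy'.le
  have : 0 < c * y ^ (c - 1) * (y' - y) :=
    mul_pos (mul_pos (by linarith) (rpow_pos_of_pos ((Δ₁_pos x).trans_le hy.1) _))
      (sub_pos.2 hyy')
  linarith

lemma sub_le_of_g_eq_add_one (hc : 1 ≤ c) (hθ : 0 ≤ θ) {N : ℝ} (hN : 0 < N)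
    (hy : y ∈ Set.Icc (Δ₁ x) (Δ₂ x)) (hy' : y' ∈ Set.Icc (Δ₁ x) (Δ₂ x)) (hNy : N ≤ g c θ y)
    (hyy' : g c θ y' = g c θ y + 1) : y' - y ≤ (2 ^ θ / N) ^ (1 - 1 / c) / c := by
  have hy₀ : 0 < y := (Δ₁_pos x).trans_le hy.1
  have hc₀ : 0 < c := by linarith
  have hle : y ≤ y' := ((strictMonoOn_g hc hθ).le_iff_le hy hy').1 (by linarith)
  have hgap := mul_rpow_sub_one_mul_sub_le_g_sub hc hθ hy hy' hle
  have hinv : (y ^ c)⁻¹ ≤ 2 ^ θ / N := by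
    rw [le_div_iff₀ hN, inv_mul_le_iff₀ (rpow_pos_of_pos hy₀ c)]
    linarith [g_le_two_rpow_mul (c := c) hθ hy]
  have hpow : (y ^ (c - 1))⁻¹ ≤ (2 ^ θ / N) ^ (1 - 1 / c) := by
    calc (y ^ (c - 1))⁻¹ = ((y ^ c)⁻¹) ^ (1 - 1 / c) := by
          rw [inv_rpow (rpow_nonneg hy₀.le c), ← rpow_mul hy₀.le]
          congr 2
          field_simp
      _ ≤ _ := rpow_le_rpow (inv_nonneg.2 (rpow_nonneg hy₀.le c)) hinv
          (by rw [sub_nonneg, div_le_one hc₀]; exact hc)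
  rw [le_div_iff₀ hc₀]
  calc (y' - y) * c = (y ^ (c - 1))⁻¹ * (c * y ^ (c - 1) * (y' - y)) := by
        field_simp
    _ ≤ (y ^ (c - 1))⁻¹ * 1 :=
        mul_le_mul_of_nonneg_left (by linarith) (inv_nonneg.2 (rpow_nonneg hy₀.le _))
    _ ≤ _ := by rwa [mul_one]

end G

lemma finsum_mem_Ioc_floor_eq_sum_range {M : Type*} [AddCommMonoid M] (F : ℕ → M) {N R : ℝ}
    (hN : 0 ≤ N) (hR : 0 ≤ R) :
    ∑ᶠ n ∈ {n : ℕ | N < n ∧ n ≤ R}, F n = ∑ i ∈ range (⌊R⌋₊ - ⌊N⌋₊), F (⌊N⌋₊ + 1 + i) := by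
  have : {n : ℕ | N < n ∧ n ≤ R} = ↑(Ico (⌊N⌋₊ + 1) (⌊R⌋₊ + 1)) := by
    ext n
    simp only [Set.mem_ofPred_eq, coe_Ico, Set.mem_Ico, ← Nat.floor_lt hN, ← Nat.le_floor_iff hR]
    omega
  rw [this, finsum_mem_coe_finset, sum_Ico_eq_sum_range, Nat.add_sub_add_right]

lemma Real.le_biSup {ι : Type*} {s : Set ι} {F : ι → ℝ} {B : ℝ} (hB : ∀ i ∈ s, F i ≤ B)
    (hB₀ : 0 ≤ B) {i : ι} (hi : i ∈ s) : F i ≤ ⨆ j ∈ s, F j := by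
  refine le_ciSup_of_le ⟨B, ?_⟩ i (by rw [ciSup_pos hi])
  rintro _ ⟨j, rfl⟩
  exact Real.iSup_le (hB j) hB₀

lemma norm_sum_range_le_biSup {E : Type*} [SeminormedAddCommGroup E] (F : ℕ → E) {N R : ℝ}
    (hN : 0 ≤ N) {j : ℕ} (hj : (⌊N⌋₊ + j : ℝ) ≤ R) :
    ‖∑ i ∈ range j, F (⌊N⌋₊ + 1 + i)‖ ≤
      ⨆ N₁ ∈ Set.Icc N R, ‖∑ᶠ n ∈ {n : ℕ | N < n ∧ n ≤ N₁}, F n‖ := by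
  rcases j.eq_zero_or_pos with rfl | hj₀
  · simpa using Real.iSup_nonneg fun _ => Real.iSup_nonneg fun _ => norm_nonneg _
  have hmem : ((⌊N⌋₊ + j : ℕ) : ℝ) ∈ Set.Icc N R := by
    have : (1 : ℝ) ≤ j := by exact_mod_cast hj₀
    push_cast
    exact ⟨by linarith [Nat.lt_floor_add_one N], hj⟩
  refine le_of_eq_of_le ?_ (Real.le_biSup (s := Set.Icc N R)
    (F := fun N₁ => ‖∑ᶠ n ∈ {n : ℕ | N < n ∧ n ≤ N₁}, F n‖)
    (B := ∑ i ∈ range (⌊R⌋₊ - ⌊N⌋₊), ‖F (⌊N⌋₊ + 1 + i)‖) (fun N₁ hN₁ => ?_)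
    (sum_nonneg fun _ _ => norm_nonneg _) hmem)
  · rw [finsum_mem_Ioc_floor_eq_sum_range _ hN (by positivity), Nat.floor_natCast,
      Nat.add_sub_cancel_left]
  · rw [finsum_mem_Ioc_floor_eq_sum_range _ hN (hN.trans hN₁.1)]
    exact (norm_sum_le _ _).trans (sum_le_sum_of_subset_of_nonneg
      (range_subset_range.2 (Nat.sub_le_sub_right (Nat.floor_mono hN₁.2) _))
      fun _ _ _ => norm_nonneg _)

theorem norm_sum_mul_e_sub_e_le_of_g_eq {c θ x N n₀ t M : ℝ} (hc : 1 ≤ c) (hθ : 1 ≤ θ)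
    (hN : 0 < N) (hn₀ : N ≤ n₀) (ht : 0 ≤ t) {w μ : ℕ → ℝ} {L : ℕ} (hL : 0 < L)
    (hμ : ∀ i ≤ L, μ i ∈ Set.Icc (Δ₁ x) (Δ₂ x) ∧ g c θ (μ i) = n₀ + i)
    (hS : ∀ j ≤ L, ‖∑ i ∈ range j, (w i : ℂ) * e (t * μ i)‖ ≤ M) :
    ‖∑ i ∈ range L, (w i : ℂ) * (e (-t * μ (i + 1)) - e (-t * μ i))‖ ≤
      2 * π * t * ((2 ^ θ / N) ^ (1 - 1 / c) / c) * M := by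
  have hM : 0 ≤ M := (norm_nonneg _).trans (hS 0 (Nat.zero_le _))
  have hstep : ∀ i < L, g c θ (μ (i + 1)) = g c θ (μ i) + 1 := fun i hi => by
    rw [(hμ (i + 1) hi).2, (hμ i hi.le).2]; push_cast; ring
  have hmono := strictMonoOn_g (x := x) hc (zero_le_one.trans hθ)
  refine (norm_sum_mul_e_sub_e_le ht hL (fun i hi => ?_) ?_ hS).trans ?_
  · exact (convexOn_g hc hθ).sub_le_sub_of_map_eq_add hmono (hμ i (by omega)).1
      (hμ (i + 1) (by omega)).1 (hμ (i + 2) (by omega)).1 one_pos (hstep i (by omega))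
      (hstep (i + 1) (by omega))
  · have := hstep (L - 1) (by omega)
    rw [Nat.sub_add_cancel hL] at this
    exact (hmono.le_iff_le (hμ _ (by omega)).1 (hμ _ le_rfl).1).1 (by linarith)
  · gcongr
    refine sub_le_of_g_eq_add_one hc (zero_le_one.trans hθ) hN (hμ 0 (Nat.zero_le _)).1
      (hμ 1 hL).1 ?_ (hstep 0 hL)
    rw [(hμ 0 (Nat.zero_le _)).2]
    simpa using hn₀

theorem stmt_16_general (c θ : ℝ) (hc₁ : 1 < c) (hθ : 1 < θ)
    (m : ℝ → ℝ → ℝ)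
    (hm : ∀ x : ℝ, 2 ≤ x → ∀ t ∈ Set.Icc (g c θ (Δ₁ x)) (g c θ (Δ₂ x)),
      m x t ∈ Set.Icc (Δ₁ x) (Δ₂ x) ∧ g c θ (m x t) = t) :
    ∃ C : ℝ, 0 < C ∧
      ∀ x : ℝ, 2 ≤ x → ∀ N : ℝ, g c θ (Δ₁ x) ≤ N → 2 * N + 1 ≤ g c θ (Δ₂ x) →
        ∀ h : ℤ, 1 ≤ h →
          ‖(∑ᶠ n ∈ {n : ℕ | N < (n : ℝ) ∧ (n : ℝ) ≤ 2 * N},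
              (ArithmeticFunction.vonMangoldt n : ℂ) *
                (e (-(h : ℝ) * m x ((n : ℝ) + 1)) - e (-(h : ℝ) * m x (n : ℝ))))‖ ≤
            C * (h : ℝ) * N ^ (1 / c - 1) *
              ⨆ N₁ ∈ Set.Icc N (2 * N),
                ‖(∑ᶠ n ∈ {n : ℕ | N < (n : ℝ) ∧ (n : ℝ) ≤ N₁},
                  (ArithmeticFunction.vonMangoldt n : ℂ) * e ((h : ℝ) * m x (n : ℝ)))‖ := by
  refine ⟨2 * π / c * (2 ^ θ) ^ (1 - 1 / c), by positivity, ?_⟩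
  intro x hx N hN₁ hN₂ h hh
  have hN : 1 ≤ N := (one_le_rpow (one_le_Δ₁ (by linarith)) (by linarith)).trans
    ((rpow_le_g (by linarith) (Δ₁_mem_Icc x)).trans hN₁)
  rw [finsum_mem_Ioc_floor_eq_sum_range _ (by linarith) (by linarith)]
  set a := ⌊N⌋₊
  have hNa : N < a + 1 := Nat.lt_floor_add_one N
  have hab : a < ⌊2 * N⌋₊ :=
    Nat.le_floor (by push_cast; linarith [Nat.floor_le (by linarith : 0 ≤ N)])
  set L := ⌊2 * N⌋₊ - a
  have haL : (a : ℝ) + L ≤ 2 * N := by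
    rw [← Nat.cast_add, Nat.add_sub_cancel' hab.le]; exact Nat.floor_le (by linarith)
  have hμ : ∀ i ≤ L, m x (a + 1 + i : ℕ) ∈ Set.Icc (Δ₁ x) (Δ₂ x) ∧
      g c θ (m x (a + 1 + i : ℕ)) = (a + 1 : ℝ) + i := fun i hi => by
    have hi' : (i : ℝ) ≤ L := by exact_mod_cast hi
    have := hm x hx (a + 1 + i : ℕ)
      ⟨by push_cast; linarith [i.cast_nonneg (α := ℝ)], by push_cast; linarith⟩
    push_cast at this ⊢
    exact this
  have hμ_succ : ∀ i, m x ((a + 1 + i : ℕ) + 1) = m x (a + 1 + (i + 1) : ℕ) := fun i => by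
    push_cast; ring_nf
  simp_rw [hμ_succ]
  refine (norm_sum_mul_e_sub_e_le_of_g_eq hc₁.le hθ.le (by linarith) hNa.le
    (by exact_mod_cast zero_le_one.trans hh) (by omega) hμ fun j hj =>
      norm_sum_range_le_biSup (N := N) (R := 2 * N)
        (fun n : ℕ => (ArithmeticFunction.vonMangoldt n : ℂ) * e (h * m x n)) (by linarith)
        (by linarith [(by exact_mod_cast hj : (j : ℝ) ≤ L)])).trans_eq ?_
  rw [div_rpow (by positivity) (by linarith), show 1 / c - 1 = -(1 - 1 / c) by ring,
    rpow_neg (by linarith)]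
  ring

theorem stmt_16 (c θ : ℝ) (hc₁ : 1 < c) (hc₂ : c < 12 / 11) (hθ : 1 < θ)
    (m : ℝ → ℝ → ℝ)
    (hm : ∀ x : ℝ, 2 ≤ x → ∀ t ∈ Set.Icc (g c θ (Δ₁ x)) (g c θ (Δ₂ x)),
      m x t ∈ Set.Icc (Δ₁ x) (Δ₂ x) ∧ g c θ (m x t) = t) :
    ∃ C : ℝ, 0 < C ∧
      ∀ x : ℝ, 2 ≤ x → ∀ N : ℝ, g c θ (Δ₁ x) ≤ N → 2 * N + 1 ≤ g c θ (Δ₂ x) →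
        ∀ h : ℤ, 1 ≤ h →
          ‖(∑ᶠ n ∈ {n : ℕ | N < (n : ℝ) ∧ (n : ℝ) ≤ 2 * N},
              (ArithmeticFunction.vonMangoldt n : ℂ) *
                (e (-(h : ℝ) * m x ((n : ℝ) + 1)) - e (-(h : ℝ) * m x (n : ℝ))))‖ ≤
            C * (h : ℝ) * N ^ (1 / c - 1) *
              ⨆ N₁ ∈ Set.Icc N (2 * N),
                ‖(∑ᶠ n ∈ {n : ℕ | N < (n : ℝ) ∧ (n : ℝ) ≤ N₁},
                  (ArithmeticFunction.vonMangoldt n : ℂ) * e ((h : ℝ) * m x (n : ℝ)))‖ :=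
  stmt_16_general c θ hc₁ hθ m hm
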